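/- Change-of-treatment weighting identity: under positivity, for any bounded function h(W,S), E_X[ 1(A = a₁)/g_{A|W}(a₂|W) · (g_{A|W,S}(a₂|W,S)/g_{A|W,S}(a₁|W,S)) · h(W,S) ] = E_X[ 1(A = a₂)/g_{A|W}(a₂|W) · h(W,S) ]. In particular, the inverse-probability weights in the first term of the efficient influence function shift the conditional distribution of S from arm a₁ to arm a₂. -/

import Mathlib

open scoped Classical BigOperators

noncomputable def Pr {Ω : Type*} [Fintype Ω] (p : Ω → ℝ) (E : Ω → Prop) : ℝ :=
  ∑ ω, if E ω then p ω else 0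

noncomputable def Ex {Ω : Type*} [Fintype Ω] (p : Ω → ℝ) (X : Ω → ℝ) : ℝ :=
  ∑ ω, p ω * X ω

noncomputable def CPr {Ω : Type*} [Fintype Ω] (p : Ω → ℝ) (E F : Ω → Prop) : ℝ :=
  Pr p (fun ω => E ω ∧ F ω) / Pr p F

/-!
By the tower property, `E[1(A = a₁) φ(W,S)] = E[g(a₁|W,S) φ(W,S)]` for every `φ`. Applied to
`φ = g(a₂|W,S) / g(a₁|W,S) · h / g(a₂|W)`, positivity of `g(a₁|W,S)` cancels the denominator,
leaving `E[g(a₂|W,S) h / g(a₂|W)]`, and the tower property read backwards with `a₂` gives the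
right-hand side.
-/

section Finite

variable {Ω κ : Type*} [Fintype Ω] (p : Ω → ℝ)

lemma Pr_nonneg (hp : ∀ ω, 0 ≤ p ω) (E : Ω → Prop) : 0 ≤ Pr p E :=
  Finset.sum_nonneg fun ω _ => by split_ifs <;> simp [hp ω]

lemma Pr_mono (hp : ∀ ω, 0 ≤ p ω) {E F : Ω → Prop} (hEF : ∀ ω, E ω → F ω) :
    Pr p E ≤ Pr p F :=
  Finset.sum_le_sum fun ω _ => by
    by_cases hE : E ω
    · simp [hE, hEF ω hE]
    · by_cases hF : F ω <;> simp [hE, hF, hp ω]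

lemma Pr_pos_of_mem (hp : ∀ ω, 0 ≤ p ω) {E : Ω → Prop} {ω : Ω} (hω : 0 < p ω) (hE : E ω) :
    0 < Pr p E := by
  refine hω.trans_le ?_
  have := Finset.single_le_sum (f := fun ω => if E ω then p ω else 0)
    (fun ω _ => by split_ifs <;> simp [hp ω]) (Finset.mem_univ ω)
  simpa [hE, Pr] using this

lemma Pr_mul_CPr (hp : ∀ ω, 0 ≤ p ω) (E F : Ω → Prop) :
    Pr p F * CPr p E F = Pr p (fun ω => E ω ∧ F ω) := by
  rcases (Pr_nonneg p hp F).eq_or_lt with hF | hF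
  · have hEF : Pr p (fun ω => E ω ∧ F ω) = 0 :=
      le_antisymm (hF ▸ Pr_mono p hp fun _ => And.right) (Pr_nonneg p hp _)
    rw [← hF, hEF, zero_mul]
  · exact mul_div_cancel₀ _ hF.ne'

lemma Ex_congr {X Y : Ω → ℝ} (hXY : ∀ ω, p ω ≠ 0 → X ω = Y ω) : Ex p X = Ex p Y :=
  Finset.sum_congr rfl fun ω _ => by
    by_cases hω : p ω = 0
    · simp [hω]
    · rw [hXY ω hω]

lemma Ex_indicator_mul_comp_eq_sum (E : Ω → Prop) [DecidablePred E] (K : Ω → κ) (φ : κ → ℝ) :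
    Ex p (fun ω => (if E ω then 1 else 0) * φ (K ω))
      = ∑ k ∈ Finset.univ.image K, Pr p (fun ω => E ω ∧ K ω = k) * φ k := by
  unfold Ex Pr
  rw [← Finset.sum_fiberwise_of_maps_to (g := K)
    fun ω _ => Finset.mem_image_of_mem K (Finset.mem_univ ω)]
  refine Finset.sum_congr rfl fun k _ => ?_
  rw [Finset.sum_mul, Finset.sum_filter]
  refine Finset.sum_congr rfl fun ω _ => ?_
  by_cases hK : K ω = k
  · subst hK
    by_cases hE : E ω <;> simp [hE]
  · simp [hK]

lemma Ex_indicator_mul_comp_eq_Ex_CPr_mul (hp : ∀ ω, 0 ≤ p ω) (E : Ω → Prop) [DecidablePred E]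
    (K : Ω → κ) (φ : κ → ℝ) :
    Ex p (fun ω => (if E ω then 1 else 0) * φ (K ω))
      = Ex p (fun ω => CPr p E (fun ω' => K ω' = K ω) * φ (K ω)) := by
  have hRHS := Ex_indicator_mul_comp_eq_sum p (fun _ => True) K
    fun k => CPr p E (fun ω' => K ω' = k) * φ k
  simp only [if_true, one_mul, true_and] at hRHS
  rw [hRHS, Ex_indicator_mul_comp_eq_sum]
  refine Finset.sum_congr rfl fun k _ => ?_
  rw [← mul_assoc, Pr_mul_CPr p hp]

end Finite

theorem change_of_treatment_weighting_general {Ω 𝕎 𝕊 : Type*} [Fintype Ω]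
    (p : Ω → ℝ) (hp : ∀ ω, 0 ≤ p ω)
    (W : Ω → 𝕎) (S : Ω → 𝕊) (A : Ω → Bool) (a₁ a₂ : Bool) (h : 𝕎 → 𝕊 → ℝ)
    (hgAS : ∀ (w : 𝕎) (s : 𝕊), Pr p (fun ω => W ω = w ∧ S ω = s) > 0 → ∀ a : Bool,
      0 < CPr p (fun ω => A ω = a) (fun ω => W ω = w ∧ S ω = s) ∧
        CPr p (fun ω => A ω = a) (fun ω => W ω = w ∧ S ω = s) < 1) :
    Ex p (fun ω =>
        (if A ω = a₁ then 1 else 0) / CPr p (fun ω' => A ω' = a₂) (fun ω' => W ω' = W ω)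
          * (CPr p (fun ω' => A ω' = a₂) (fun ω' => W ω' = W ω ∧ S ω' = S ω)
              / CPr p (fun ω' => A ω' = a₁) (fun ω' => W ω' = W ω ∧ S ω' = S ω))
          * h (W ω) (S ω))
      = Ex p (fun ω =>
          (if A ω = a₂ then 1 else 0) / CPr p (fun ω' => A ω' = a₂) (fun ω' => W ω' = W ω)
            * h (W ω) (S ω)) := by
  set K : Ω → 𝕎 × 𝕊 := fun ω => (W ω, S ω)
  have hK : ∀ ω, (fun ω' => W ω' = W ω ∧ S ω' = S ω) = fun ω' => K ω' = K ω := fun ω => by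
    simp [K]
  let g : Bool → 𝕎 × 𝕊 → ℝ := fun a k => CPr p (fun ω => A ω = a) (fun ω => K ω = k)
  let φ : 𝕎 × 𝕊 → ℝ := fun k => h k.1 k.2 / CPr p (fun ω => A ω = a₂) (fun ω => W ω = k.1)
  have hg₁ : ∀ ω, p ω ≠ 0 → g a₁ (K ω) ≠ 0 := fun ω hω => by
    have hpos := Pr_pos_of_mem p hp ((hp ω).lt_of_ne' hω) (E := fun ω' => K ω' = K ω) rfl
    rw [← hK] at hpos
    simpa only [g, ← hK] using (hgAS (W ω) (S ω) hpos a₁).1.ne'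
  calc _ = Ex p (fun ω => (if A ω = a₁ then 1 else 0) * (g a₂ (K ω) / g a₁ (K ω) * φ (K ω))) := by
          simp only [g, φ, K, hK]; unfold Ex; congr 1; funext ω; ring
    _ = Ex p (fun ω => g a₁ (K ω) * (g a₂ (K ω) / g a₁ (K ω) * φ (K ω))) :=
          Ex_indicator_mul_comp_eq_Ex_CPr_mul p hp _ K fun k => g a₂ k / g a₁ k * φ k
    _ = Ex p (fun ω => g a₂ (K ω) * φ (K ω)) :=
          Ex_congr p fun ω hω => by rw [← mul_assoc, mul_div_cancel₀ _ (hg₁ ω hω)]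
    _ = Ex p (fun ω => (if A ω = a₂ then 1 else 0) * φ (K ω)) :=
          (Ex_indicator_mul_comp_eq_Ex_CPr_mul p hp _ K φ).symm
    _ = _ := by simp only [φ, K]; unfold Ex; congr 1; funext ω; ring

/-- change-of-treatment weighting identity. Under positivity, for any
function `h(W,S)`,
`E[ 1(A=a₁)/g_{A|W}(a₂|W) · (g_{A|W,S}(a₂|W,S)/g_{A|W,S}(a₁|W,S)) · h(W,S) ]
  = E[ 1(A=a₂)/g_{A|W}(a₂|W) · h(W,S) ]`. -/
theorem change_of_treatment_weighting {Ω 𝕎 𝕊 : Type*} [Fintype Ω]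
    (p : Ω → ℝ) (hp : ∀ ω, 0 ≤ p ω) (hp1 : ∑ ω, p ω = 1)
    (W : Ω → 𝕎) (S : Ω → 𝕊) (A : Ω → Bool) (a₁ a₂ : Bool) (h : 𝕎 → 𝕊 → ℝ)
    (hgA : ∀ w : 𝕎, Pr p (fun ω => W ω = w) > 0 → ∀ a : Bool,
      0 < CPr p (fun ω => A ω = a) (fun ω => W ω = w) ∧
        CPr p (fun ω => A ω = a) (fun ω => W ω = w) < 1)
    (hgAS : ∀ (w : 𝕎) (s : 𝕊), Pr p (fun ω => W ω = w ∧ S ω = s) > 0 → ∀ a : Bool,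
      0 < CPr p (fun ω => A ω = a) (fun ω => W ω = w ∧ S ω = s) ∧
        CPr p (fun ω => A ω = a) (fun ω => W ω = w ∧ S ω = s) < 1) :
    Ex p (fun ω =>
        (if A ω = a₁ then 1 else 0) / CPr p (fun ω' => A ω' = a₂) (fun ω' => W ω' = W ω)
          * (CPr p (fun ω' => A ω' = a₂) (fun ω' => W ω' = W ω ∧ S ω' = S ω)
              / CPr p (fun ω' => A ω' = a₁) (fun ω' => W ω' = W ω ∧ S ω' = S ω))
          * h (W ω) (S ω))
      = Ex p (fun ω =>
          (if A ω = a₂ then 1 else 0) / CPr p (fun ω' => A ω' = a₂) (fun ω' => W ω' = W ω)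
            * h (W ω) (S ω)) :=
  change_of_treatment_weighting_general p hp W S A a₁ a₂ h hgAS
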